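/- Let N ≥ 1 and let Ψ be the N × N DCT matrix with entries ψ_{n,m} = b(n)√(2/N) · cos(π n (m + 1/2)/N) for 0 ≤ n, m < N, where b(0) = 1/√2 and b(n) = 1 for n ≥ 1. Let K ≥ 1 with 4K ≤ N. If c, c′ ∈ ℂ^N each have at most K nonzero entries and (Ψc)_n = (Ψc′)_n for all n in a block of 4K consecutive indices {ℓ, ℓ+1, …, ℓ+4K−1} ⊆ {0, …, N−1}, then c = c′. In other words, a K-sparse vector c is uniquely determined by any 4K consecutive entries of its DCT Ψc. -/

import Mathlib

open scoped Classical

/-- The number of nonzero entries (the "ℓ₀ norm") of a vector. -/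
noncomputable def l0 {ι : Type*} [Fintype ι] (x : ι → ℂ) : ℕ :=
  (Finset.univ.filter (fun i => x i ≠ 0)).card

/-- The `N × N` DCT matrix, with entries
`ψ n m = b n * √(2/N) * cos (π n (m + 1/2) / N)`, where `b 0 = 1/√2` and `b n = 1`
for `n ≥ 1`. -/
noncomputable def dct (N : ℕ) : Matrix (Fin N) (Fin N) ℂ :=
  fun n m =>
    (((if (n : ℕ) = 0 then 1 / Real.sqrt 2 else 1) * Real.sqrt (2 / N) *
      Real.cos (Real.pi * (n : ℕ) * ((m : ℕ) + 1 / 2) / N) : ℝ) : ℂ)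

/-!
Write `θ_m = π (m + 1/2) / N`, so that `ψ_{n,m}` is a nonzero multiple of `cos (n θ_m)`, and
`2 cos (n θ_m) = z_m ^ n + z_m⁻¹ ^ n` with `z_m = exp (i θ_m)`. For `d = c - c'`, the vanishing of
`(Ψ d)_n` on the block `ℓ ≤ n < ℓ + 4K` says that `4K` consecutive power moments of the vector
`(d, d)` at the `2N` nodes `z_m, z_m⁻¹` vanish. These nodes are distinct because `θ_m ∈ (0, π)`,
and `(d, d)` has at most `4K` nonzero entries, so a Vandermonde (Lagrange interpolation) argument
forces `d = 0`.
-/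

open Finset Polynomial Complex

theorem sum_mul_eval_eq_zero_of_sum_mul_pow_eq_zero {ι R : Type*} [CommRing R] (s : Finset ι)
    (f x : ι → R) {L : ℕ} (h : ∀ n < L, ∑ i ∈ s, f i * x i ^ n = 0) {p : R[X]}
    (hp : p.natDegree < L) : ∑ i ∈ s, f i * p.eval (x i) = 0 := by
  simp_rw [eval_eq_sum_range, mul_sum, mul_left_comm (f _)]
  rw [sum_comm]
  refine sum_eq_zero fun n hn => ?_
  rw [← mul_sum, h n (by rw [mem_range] at hn; omega), mul_zero]

theorem eq_zero_of_sum_mul_pow_eq_zero {ι F : Type*} [Field F] [DecidableEq ι] {s : Finset ι}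
    {x : ι → F} (hx : Set.InjOn x s) {f : ι → F}
    (h : ∀ n < #s, ∑ i ∈ s, f i * x i ^ n = 0) {i : ι} (hi : i ∈ s) : f i = 0 := by
  have hdeg : (Lagrange.basis s x i).natDegree < #s := by
    rw [Lagrange.natDegree_basis hx hi]
    exact Nat.sub_lt (card_pos.mpr ⟨i, hi⟩) one_pos
  have := sum_mul_eval_eq_zero_of_sum_mul_pow_eq_zero s f x h hdeg
  rwa [sum_eq_single_of_mem i hi fun j hj hji => by
      rw [Lagrange.eval_basis_of_ne hji.symm hj, mul_zero],
    Lagrange.eval_basis_self hx hi, mul_one] at this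

theorem l0_sumElim {ι κ : Type*} [Fintype ι] [Fintype κ] (f : ι → ℂ) (g : κ → ℂ) :
    l0 (Sum.elim f g) = l0 f + l0 g := by
  simp only [l0, card_filter, Fintype.sum_sum_type, Sum.elim_inl, Sum.elim_inr]
  congr

theorem l0_sub_le {ι : Type*} [Fintype ι] (f g : ι → ℂ) : l0 (f - g) ≤ l0 f + l0 g := by
  unfold l0
  refine (card_le_card fun i => ?_).trans (card_union_le _ _)
  simp only [mem_filter, mem_univ, true_and, mem_union, Pi.sub_apply]
  contrapose!
  rintro ⟨hf, hg⟩
  simp [hf, hg]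

theorem eq_zero_of_l0_le_of_sum_mul_pow_eq_zero {ι : Type*} [Fintype ι] {x : ι → ℂ}
    (hx : Function.Injective x) (hx0 : ∀ i, x i ≠ 0) {f : ι → ℂ} {L ℓ : ℕ} (hf : l0 f ≤ L)
    (h : ∀ j < L, ∑ i, f i * x i ^ (ℓ + j) = 0) : f = 0 := by
  set s := univ.filter fun i => f i ≠ 0
  have hmoments : ∀ n < #s, ∑ i ∈ s, f i * x i ^ ℓ * x i ^ n = 0 := fun n hn => by
    rw [sum_filter_of_ne fun i _ hi => left_ne_zero_of_mul (left_ne_zero_of_mul hi)]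
    simpa only [mul_assoc, ← pow_add] using h n (hn.trans_le hf)
  funext i
  by_contra hi
  have his : i ∈ s := by simpa [s] using hi
  exact mul_ne_zero hi (pow_ne_zero ℓ (hx0 i))
    (eq_zero_of_sum_mul_pow_eq_zero hx.injOn hmoments his)

theorem injOn_cexp_ofReal_mul_I :
    Set.InjOn (fun t : ℝ => cexp (t * I)) (Set.Ioc (-Real.pi) Real.pi) := fun s hs t ht h => by
  simpa using exp_inj_of_neg_pi_lt_of_le_pi (by simpa using hs.1) (by simpa using hs.2)
    (by simpa using ht.1) (by simpa using ht.2) h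

theorem injective_cexp_sumElim_neg_mul_I {ι : Type*} {θ : ι → ℝ} (hθ : Function.Injective θ)
    (hθπ : ∀ i, θ i ∈ Set.Ioo 0 Real.pi) :
    Function.Injective fun p => cexp (Sum.elim θ (-θ) p * I) := by
  have hsym : Function.Injective (Sum.elim θ (-θ)) :=
    hθ.sumElim (neg_injective.comp hθ) fun i j h => by
      linarith [(hθπ i).1, (hθπ j).1, show θ i = -θ j from h]
  have hmem : ∀ p, Sum.elim θ (-θ) p ∈ Set.Ioc (-Real.pi) Real.pi := by
    rintro (i | i) <;> constructor <;> simp <;> linarith [(hθπ i).1, (hθπ i).2]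
  exact fun p q h => hsym (injOn_cexp_ofReal_mul_I (hmem p) (hmem q) h)

theorem two_mul_sum_mul_cos_eq_sum_sumElim {ι : Type*} [Fintype ι] (d : ι → ℂ) (θ : ι → ℝ)
    (n : ℕ) : 2 * ∑ i, d i * Real.cos (n * θ i) =
      ∑ p, Sum.elim d d p * cexp (Sum.elim θ (-θ) p * I) ^ n := by
  simp only [Fintype.sum_sum_type, Sum.elim_inl, Sum.elim_inr, ← exp_nat_mul, mul_sum,
    ← sum_add_distrib]
  refine sum_congr rfl fun i _ => ?_
  rw [ofReal_cos, ← mul_left_comm, two_cos]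
  push_cast [Pi.neg_apply]
  ring_nf

noncomputable def dctAngle (N : ℕ) (m : Fin N) : ℝ := Real.pi * (m + 1 / 2) / N

theorem dctAngle_mem_Ioo {N : ℕ} (m : Fin N) : dctAngle N m ∈ Set.Ioo 0 Real.pi := by
  have hm : (m : ℝ) + 1 ≤ N := by exact_mod_cast m.isLt
  have hN : (0 : ℝ) < N := by linarith [(Nat.cast_nonneg m : (0 : ℝ) ≤ m)]
  rw [dctAngle, Set.mem_Ioo, div_lt_iff₀ hN]
  constructor
  · positivity
  · nlinarith [Real.pi_pos]

theorem dctAngle_injective (N : ℕ) : Function.Injective (dctAngle N) := fun m m' h => by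
  have hN : (N : ℝ) ≠ 0 := by have := m.pos; positivity
  simp only [dctAngle, div_left_inj' hN, mul_right_inj' Real.pi_ne_zero, add_left_inj,
    Nat.cast_inj] at h
  exact Fin.ext h

theorem dct_mulVec_eq_zero_iff {N : ℕ} (d : Fin N → ℂ) (n : Fin N) :
    (dct N).mulVec d n = 0 ↔ ∑ m, d m * Real.cos (n * dctAngle N m) = 0 := by
  set β : ℝ := (if (n : ℕ) = 0 then 1 / Real.sqrt 2 else 1) * Real.sqrt (2 / N)
  have hβ : (β : ℂ) ≠ 0 := by
    have : (0 : ℝ) < N := by exact_mod_cast n.pos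
    exact ofReal_ne_zero.mpr (by positivity)
  have hfactor : (dct N).mulVec d n = β * ∑ m, d m * Real.cos (n * dctAngle N m) := by
    simp only [Matrix.mulVec, dotProduct, dct, dctAngle, mul_sum, β]
    refine sum_congr rfl fun m _ => ?_
    push_cast
    ring_nf
  rw [hfactor, mul_eq_zero, or_iff_right hβ]

/-- **A `K`-sparse vector is determined by any `4K` consecutive entries of its DCT.**
If `c, c'` each have at most `K` nonzero entries, `4K ≤ N`, and `Ψ c` agrees with `Ψ c'` on a
block of `4K` consecutive indices contained in `{0, …, N-1}`, where `Ψ` is the `N × N` DCT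
matrix, then `c = c'`. -/
theorem stmt18 (N K : ℕ)
    (c c' : Fin N → ℂ) (hc : l0 c ≤ K) (hc' : l0 c' ≤ K)
    (ℓ : ℕ) (hblock : ℓ + 4 * K ≤ N)
    (hagree : ∀ (j : ℕ) (hj : j < 4 * K),
      (dct N).mulVec c ⟨ℓ + j, by omega⟩ = (dct N).mulVec c' ⟨ℓ + j, by omega⟩) :
    c = c' := by
  have hmoments : ∀ j < 4 * K, ∑ p, Sum.elim (c - c') (c - c') p *
      cexp (Sum.elim (dctAngle N) (-dctAngle N) p * I) ^ (ℓ + j) = 0 := fun j hj => by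
    have hzero := (dct_mulVec_eq_zero_iff (c - c') ⟨ℓ + j, by omega⟩).mp
      (by rw [Matrix.mulVec_sub, Pi.sub_apply, hagree j hj, sub_self])
    rw [← two_mul_sum_mul_cos_eq_sum_sumElim]
    exact_mod_cast mul_eq_zero_of_right 2 hzero
  have hsparse : l0 (Sum.elim (c - c') (c - c')) ≤ 4 * K := by
    rw [l0_sumElim]
    linarith [l0_sub_le c c']
  have hdiff := eq_zero_of_l0_le_of_sum_mul_pow_eq_zero
    (injective_cexp_sumElim_neg_mul_I (dctAngle_injective N) dctAngle_mem_Ioo)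
    (fun _ => exp_ne_zero _) hsparse hmoments
  funext m
  exact sub_eq_zero.mp (congr_fun hdiff (Sum.inl m))
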